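/- arXiv:1702.03789 — 3 statements merged into one kernel-verified Lean document; each statement's English description precedes it below -/
import Mathlib

section
/- Let X be a connected graph of uniformly bounded degree that has exponentially many fat bigons at some base vertex x0. Then there is no coarse embedding of X into any δ-hyperbolic connected graph of uniformly bounded degree. -/
/-!
Let `f : X → Y` be a coarse embedding. Since `f` has uniformly bounded fibres and `Y` has bounded
degree, at most `A ^ R` vertices of `X` are sent into a ball of radius `R` about `f x₀`, with `A`
independent of `n`. So among the `cⁿ` bigon vertices of `B_n(x₀)` there is one, `x`, with
`d(f x₀, f x) ≳ n / Λ`. Joining the images of consecutive vertices of its bigon by geodesics gives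
a bigon at `f x` in `Y` whose length ratio is bounded independently of `n`, and which is still fat
because `f` is uniformly proper.

Hyperbolic graphs have no fat bigons. Cut a path `β` with the same endpoints as a geodesic `γ`
into blocks of `h` edges and project them to `γ`: a block that comes near `γ` stays near it and
shadows its projection, and a block that stays far from `γ` has a projection of bounded size
(bounded geodesic image). Hence all but `O(|β| / h)` vertices of `γ` lie `O(h)`-close to `β`, and
two paths of length `≤ L · |γ|` pass close to each other near the middle of `γ`.
-/

open SimpleGraph

/-- A graph has uniformly bounded degree if there is a uniform finite bound on
the cardinality of all neighbour sets. -/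
def BddDegree {V : Type*} (G : SimpleGraph V) : Prop :=
  ∃ D : ℕ, ∀ v : V, (G.neighborSet v).encard ≤ D

/-- A walk is geodesic if its length realizes the graph distance between its endpoints. -/
def SimpleGraph.Walk.IsGeodesic {V : Type*} {G : SimpleGraph V} {x y : V}
    (w : G.Walk x y) : Prop :=
  w.length = G.dist x y

/-- A graph is `δ`-hyperbolic if each side of every geodesic triangle is contained in the
closed `δ`-neighbourhood of the union of the other two sides. -/
def GraphHyperbolic {V : Type*} (G : SimpleGraph V) (δ : ℝ) : Prop :=
  ∀ ⦃a b c : V⦄ (γ₁ : G.Walk a b) (γ₂ : G.Walk b c) (γ₃ : G.Walk c a),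
    γ₁.IsGeodesic → γ₂.IsGeodesic → γ₃.IsGeodesic →
      ∀ u ∈ γ₁.support, ∃ v, (v ∈ γ₂.support ∨ v ∈ γ₃.support) ∧ (G.dist u v : ℝ) ≤ δ

/-- `x` admits an `(L,s,C)`-bigon with respect to the basepoint `x₀`: two paths from `x₀`
to `x`, each of length at most `L·d(x₀,x)`, such that any vertex of the first path outside
the `C`-neighbourhood of `{x₀, x}` is at distance more than `s` from any vertex of the
second path outside that neighbourhood. -/
def IsBigonAt {V : Type*} (G : SimpleGraph V) (x₀ : V) (L s C : ℝ) (x : V) : Prop :=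
  ∃ α₁ α₂ : G.Walk x₀ x,
    ((α₁.length : ℝ) ≤ L * G.dist x₀ x) ∧ ((α₂.length : ℝ) ≤ L * G.dist x₀ x) ∧
    ∀ u ∈ α₁.support, ∀ v ∈ α₂.support,
      (C < (G.dist x₀ u : ℝ) ∧ C < (G.dist x u : ℝ)) →
      (C < (G.dist x₀ v : ℝ) ∧ C < (G.dist x v : ℝ)) →
      s < (G.dist u v : ℝ)

/-- The set `B^X(L,s,C)` of vertices admitting an `(L,s,C)`-bigon. -/
def bigonSet {V : Type*} (G : SimpleGraph V) (x₀ : V) (L s C : ℝ) : Set V :=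
  {x | IsBigonAt G x₀ L s C x}

/-- The closed ball of radius `n` about `x` in the graph metric. -/
def gBall {V : Type*} (G : SimpleGraph V) (x : V) (n : ℕ) : Set V :=
  {v | G.dist x v ≤ n}

/-- `X` has exponentially many fat bigons at `x₀`. -/
def HasExpManyFatBigons {V : Type*} (G : SimpleGraph V) (x₀ : V) : Prop :=
  ∃ s₀ c L : ℝ, 0 ≤ s₀ ∧ 1 < c ∧ 1 < L ∧
    ∀ s : ℝ, s₀ ≤ s → ∃ C : ℝ, 0 ≤ C ∧
      {n : ℕ | (c ^ n : ℝ) ≤ ((bigonSet G x₀ L s C ∩ gBall G x₀ n).ncard : ℝ)}.Infinite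

/-- `X` has no fat bigons at `x₀`. -/
def HasNoFatBigons {V : Type*} (G : SimpleGraph V) (x₀ : V) : Prop :=
  ∀ L : ℝ, 1 ≤ L → ∃ s : ℝ, 0 ≤ s ∧ ∀ C : ℝ, 0 ≤ C →
    ∃ R : ℕ, ∀ x ∈ bigonSet G x₀ L s C, G.dist x₀ x ≤ R

/-- A coarse embedding of the graph `G` into the graph `H`, with multiplicative constant `K`
and compression function `ρ`. -/
def IsCoarseEmbedding {V W : Type*} (G : SimpleGraph V) (H : SimpleGraph W)
    (f : V → W) (K : ℝ) (ρ : ℕ → ℕ) : Prop :=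
  1 ≤ K ∧ Filter.Tendsto ρ Filter.atTop Filter.atTop ∧
    ∀ x y : V, (ρ (G.dist x y) : ℝ) ≤ (H.dist (f x) (f y) : ℝ) ∧
      (H.dist (f x) (f y) : ℝ) ≤ K * (G.dist x y : ℝ)

/-- The Cayley graph of a group with respect to a (symmetric) set `S`. -/
def cayleyGraph (G : Type*) [Group G] (S : Set G) : SimpleGraph G :=
  SimpleGraph.fromRel (fun x y => x⁻¹ * y ∈ S)

/-- The Cayley graph of `G` w.r.t. the basepoint `1` has exponential growth:
`|B_n(1)|^(1/n)` converges to a limit `> 1`. -/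
def HasExpGrowth {V : Type*} (G : SimpleGraph V) (x₀ : V) : Prop :=
  ∃ a : ℝ, 1 < a ∧
    Filter.Tendsto (fun n : ℕ => ((gBall G x₀ n).ncard : ℝ) ^ ((n : ℝ)⁻¹))
      Filter.atTop (nhds a)

/-- `Div_X(n) ≤ M`: for all vertices `a b` with `d(a,b) ≤ n` and every `c ∉ {a, b}`, there is
a path from `a` to `b` of length at most `M` avoiding the ball around `c` of radius
`(1/2)·d(c,{a,b}) − 2`. -/
def DivLE {V : Type*} (G : SimpleGraph V) (n : ℕ) (M : ℝ) : Prop :=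
  ∀ a b c : V, G.dist a b ≤ n → c ≠ a → c ≠ b →
    ∃ w : G.Walk a b, (w.length : ℝ) ≤ M ∧
      ∀ u ∈ w.support, ((min (G.dist c a) (G.dist c b) : ℝ)) / 2 - 2 < (G.dist c u : ℝ)

/-- A group (given as a graph) is one-ended. -/
def OneEnded {V : Type*} (G : SimpleGraph V) : Prop :=
  ∃! e, e ∈ G.end

lemma Nat.exists_le_lt_succ_of_le_of_lt {f : ℕ → ℕ} {j n : ℕ} (h₀ : f 0 ≤ j) (hn : j < f n) :
    ∃ t < n, f t ≤ j ∧ j < f (t + 1) := by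
  induction n with
  | zero => omega
  | succ m ih =>
    by_cases hm : j < f m
    · obtain ⟨t, ht, h⟩ := ih hm
      exact ⟨t, by omega, h⟩
    · exact ⟨m, by omega, by omega, hn⟩

lemma Nat.four_mul_div_mul_le {ℓ a D h κ : ℕ} (hℓ : ℓ ≤ a * D) (ha : 0 < a)
    (hh : 4 * a * κ ≤ h) : 4 * (ℓ / h * κ) ≤ D := by
  refine Nat.le_of_mul_le_mul_left ?_ ha
  calc a * (4 * (ℓ / h * κ)) = ℓ / h * (4 * a * κ) := by ring
    _ ≤ ℓ / h * h := Nat.mul_le_mul_left _ hh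
    _ ≤ a * D := (Nat.div_mul_le_self ℓ h).trans hℓ

lemma Set.encard_le_ncard_mul_of_subset_biUnion {α β : Type*} {s : Set α} {t : Set β}
    (ht : t.Finite) {u : β → Set α} (hs : s ⊆ ⋃ b ∈ t, u b) {k : ℕ∞}
    (hk : ∀ b ∈ t, (u b).encard ≤ k) : s.encard ≤ t.ncard * k :=
  calc s.encard ≤ (⋃ b ∈ ht.toFinset, u b).encard := Set.encard_mono (by simpa using hs)
    _ ≤ ∑ b ∈ ht.toFinset, (u b).encard := Finset.set_encard_biUnion_le _ _
    _ ≤ ∑ _b ∈ ht.toFinset, k := Finset.sum_le_sum fun b hb ↦ hk b (by simpa using hb)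
    _ = t.ncard * k := by simp [Set.ncard_eq_toFinset_card t ht]

lemma exists_pow_div_add_one_mul_lt_pow {c : ℝ} (hc : 1 < c) (A B : ℕ) :
    ∃ Λ n₀ : ℕ, 0 < Λ ∧ ∀ n ≥ n₀, ((A ^ (n / Λ + 1) * B : ℕ) : ℝ) < c ^ n := by
  obtain ⟨μ₀, hμ₀⟩ := pow_unbounded_of_one_lt (A : ℝ) hc
  obtain ⟨μ, hμpos, hμ⟩ : ∃ μ, 0 < μ ∧ (A : ℝ) < c ^ μ :=
    ⟨μ₀ + 1, by omega, hμ₀.trans_le (pow_le_pow_right₀ hc.le (by omega))⟩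
  obtain ⟨m, hm⟩ := pow_unbounded_of_one_lt (B : ℝ) hc
  refine ⟨2 * μ, 2 * (μ + m), by omega, fun n hn ↦ ?_⟩
  have hq : μ * (n / (2 * μ) + 1) ≤ n / 2 + μ := by
    have := Nat.div_mul_le_self n (2 * μ)
    have : μ * (n / (2 * μ)) * 2 = n / (2 * μ) * (2 * μ) := by ring
    rw [mul_add_one]
    omega
  push_cast
  calc (A : ℝ) ^ (n / (2 * μ) + 1) * B < (c ^ μ) ^ (n / (2 * μ) + 1) * c ^ m := by
        gcongr
    _ ≤ c ^ (n / 2 + μ) * c ^ m := by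
        rw [← pow_mul]; gcongr; exact hc.le
    _ = c ^ (n / 2 + μ + m) := by rw [← pow_add]
    _ ≤ c ^ n := pow_le_pow_right₀ hc.le (by omega)

namespace SimpleGraph

variable {V : Type*} {G : SimpleGraph V} {u v x : V}

namespace Walk

lemma dist_getVert_le (p : G.Walk u v) {i j : ℕ} (hij : i ≤ j) :
    G.dist (p.getVert i) (p.getVert j) ≤ j - i := by
  have h := dist_le ((p.drop i).take (j - i))
  rw [take_length] at h
  rw [drop_getVert, Nat.add_sub_cancel' hij] at h
  omega

lemma dist_getVert_getVert_le (p : G.Walk u v) (i j : ℕ) :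
    G.dist (p.getVert i) (p.getVert j) ≤ j - i + (i - j) := by
  rcases le_total i j with hij | hji
  · have := p.dist_getVert_le hij
    omega
  · have := p.dist_getVert_le hji
    rw [dist_comm] at this
    omega

lemma IsGeodesic.dist_getVert {p : G.Walk u v} (hp : p.IsGeodesic) {i j : ℕ} (hij : i ≤ j)
    (hj : j ≤ p.length) : G.dist (p.getVert i) (p.getVert j) = j - i := by
  have h₁ := (p.take i).reachable.dist_triangle_left v
  have h₂ := (p.drop j).reachable.dist_triangle_right (p.getVert i)
  have := p.dist_getVert_le (Nat.zero_le i)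
  have := p.dist_getVert_le hij
  have := p.dist_getVert_le hj
  rw [getVert_zero] at *
  rw [getVert_length] at *
  unfold IsGeodesic at hp
  omega

lemma IsGeodesic.dist_add_dist_of_mem_support {p : G.Walk u v} (hp : p.IsGeodesic)
    (hx : x ∈ p.support) : G.dist u x + G.dist x v = G.dist u v := by
  obtain ⟨i, rfl, hi⟩ := mem_support_iff_exists_getVert.mp hx
  have h₁ := hp.dist_getVert (Nat.zero_le i) hi
  have h₂ := hp.dist_getVert hi le_rfl
  rw [getVert_zero] at h₁
  rw [getVert_length] at h₂
  unfold IsGeodesic at hp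
  omega

noncomputable def nearestIdx (γ : G.Walk u v) (y : V) : ℕ :=
  Function.argminOn (fun j ↦ G.dist y (γ.getVert j)) (Set.Iic γ.length) ⟨0, Nat.zero_le _⟩

lemma nearestIdx_le_length (γ : G.Walk u v) (y : V) : γ.nearestIdx y ≤ γ.length :=
  Set.mem_Iic.mp (Function.argminOn_mem _ _ _)

lemma dist_getVert_nearestIdx_le (γ : G.Walk u v) (y : V) {j : ℕ} (hj : j ≤ γ.length) :
    G.dist y (γ.getVert (γ.nearestIdx y)) ≤ G.dist y (γ.getVert j) :=
  Function.argminOn_le (fun j ↦ G.dist y (γ.getVert j)) _ (Set.mem_Iic.mpr hj)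

lemma IsGeodesic.nearestIdx_start {γ : G.Walk u v} (hγ : γ.IsGeodesic) : γ.nearestIdx u = 0 := by
  have h := γ.dist_getVert_nearestIdx_le u (Nat.zero_le _)
  rw [getVert_zero, dist_self, Nat.le_zero] at h
  have := hγ.dist_getVert (Nat.zero_le _) (γ.nearestIdx_le_length u)
  rw [getVert_zero] at this
  omega

lemma IsGeodesic.nearestIdx_end {γ : G.Walk u v} (hγ : γ.IsGeodesic) :
    γ.nearestIdx v = γ.length := by
  have h := γ.dist_getVert_nearestIdx_le v le_rfl
  rw [getVert_length, dist_self, Nat.le_zero, dist_comm] at h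
  have := hγ.dist_getVert (γ.nearestIdx_le_length v) le_rfl
  rw [getVert_length] at this
  have := γ.nearestIdx_le_length v
  omega

end Walk

lemma Connected.exists_isGeodesic_mem_support (hc : G.Connected)
    (hx : G.dist u x + G.dist x v = G.dist u v) :
    ∃ p : G.Walk u v, p.IsGeodesic ∧ x ∈ p.support := by
  obtain ⟨p, hp⟩ := hc.exists_walk_length_eq_dist u x
  obtain ⟨q, hq⟩ := hc.exists_walk_length_eq_dist x v
  exact ⟨p.append q, by simp [Walk.IsGeodesic, hp, hq, hx], by simp⟩

lemma Connected.dist_le_two_mul_of_dist_le (hc : G.Connected) {y z z' w : V}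
    (hz : G.dist y z ≤ G.dist y z') (hw : G.dist z w + G.dist w y = G.dist z y) :
    G.dist z z' ≤ 2 * G.dist w z' := by
  have := hc.dist_triangle (u := y) (v := w) (w := z')
  have := hc.dist_triangle (u := z) (v := w) (w := z')
  rw [dist_comm (u := y) (v := w), dist_comm (u := y) (v := z)] at *
  omega

namespace Walk

variable (hc : G.Connected)
include hc

lemma dist_getVert_nearestIdx_le_add (γ : G.Walk u v) (y y' : V) :
    G.dist y (γ.getVert (γ.nearestIdx y)) ≤
      G.dist y y' + G.dist y' (γ.getVert (γ.nearestIdx y')) :=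
  (γ.dist_getVert_nearestIdx_le y (γ.nearestIdx_le_length y')).trans hc.dist_triangle

lemma IsGeodesic.dist_getVert_le_of_nearestIdx_le {γ : G.Walk u v} (hγ : γ.IsGeodesic)
    {y y' : V} {j : ℕ} (h₁ : γ.nearestIdx y ≤ j) (h₂ : j ≤ γ.nearestIdx y') :
    G.dist (γ.getVert j) y ≤ 2 * G.dist y (γ.getVert (γ.nearestIdx y)) + G.dist y y' +
      G.dist y' (γ.getVert (γ.nearestIdx y')) := by
  have hp' := γ.nearestIdx_le_length y'
  have hj := hγ.dist_getVert h₁ (h₂.trans hp')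
  have hpp' := hγ.dist_getVert (h₁.trans h₂) hp'
  have := hc.dist_triangle (u := γ.getVert (γ.nearestIdx y)) (v := y)
    (w := γ.getVert (γ.nearestIdx y'))
  have := hc.dist_triangle (u := y) (v := y') (w := γ.getVert (γ.nearestIdx y'))
  have := hc.dist_triangle (u := γ.getVert j) (v := γ.getVert (γ.nearestIdx y)) (w := y)
  have := dist_comm (G := G) (u := γ.getVert j) (v := γ.getVert (γ.nearestIdx y))
  have := dist_comm (G := G) (u := y) (v := γ.getVert (γ.nearestIdx y))
  omega

end Walk

lemma Connected.encard_gBall_le (hc : G.Connected) {D : ℕ}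
    (hD : ∀ v, (G.neighborSet v).encard ≤ D) (x : V) (n : ℕ) :
    (gBall G x n).encard ≤ ((D + 1) ^ (n + 1) : ℕ) := by
  induction n with
  | zero =>
    have : gBall G x 0 = {x} := by
      ext y
      simp [gBall, hc.dist_eq_zero_iff, eq_comm]
    simp [this]
  | succ n ih =>
    have hfin := Set.finite_of_encard_le_coe ih
    have hcover : gBall G x (n + 1) ⊆ ⋃ y ∈ gBall G x n, insert y (G.neighborSet y) := by
      intro y hy
      simp only [gBall, Set.mem_ofPred_eq] at hy
      rcases Nat.lt_or_ge n (G.dist x y) with hn | hn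
      · obtain ⟨p, hp⟩ := hc.exists_walk_length_eq_dist x y
        have hadj := p.adj_getVert_succ (i := n) (by omega)
        rw [p.getVert_of_length_le (i := n + 1) (by omega)] at hadj
        have := p.dist_getVert_le (Nat.zero_le n)
        rw [Walk.getVert_zero] at this
        exact Set.mem_biUnion (x := p.getVert n) (by simp [gBall]; omega)
          (Set.mem_insert_of_mem _ hadj)
      · exact Set.mem_biUnion (x := y) hn (Set.mem_insert _ _)
    calc (gBall G x (n + 1)).encard ≤ (gBall G x n).ncard * ((D + 1 : ℕ) : ℕ∞) :=
          Set.encard_le_ncard_mul_of_subset_biUnion hfin hcover fun y _ ↦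
            (Set.encard_insert_le _ _).trans (by push_cast; gcongr; exact hD y)
      _ ≤ ((D + 1) ^ (n + 1) : ℕ) * ((D + 1 : ℕ) : ℕ∞) := by
          rw [hfin.cast_ncard_eq]; gcongr
      _ = ((D + 1) ^ (n + 1 + 1) : ℕ) := by push_cast; ring

lemma Walk.exists_walk_near_image {W : Type*} {X : SimpleGraph V}
    {Y : SimpleGraph W} (hc : Y.Connected) {f : V → W} {k : ℕ}
    (hf : ∀ a b, X.Adj a b → Y.dist (f a) (f b) ≤ k) {a b : V} (α : X.Walk a b) :
    ∃ β : Y.Walk (f a) (f b), β.length ≤ k * α.length ∧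
      ∀ y ∈ β.support, ∃ x ∈ α.support, Y.dist (f x) y ≤ k := by
  induction α with
  | nil => exact ⟨.nil, by simp, fun y hy ↦ ⟨_, Walk.start_mem_support _, by simp_all⟩⟩
  | @cons a b' b hab α ih =>
    obtain ⟨β, hβ, hnear⟩ := ih
    obtain ⟨γ, hγ⟩ : ∃ γ : Y.Walk (f a) (f b'), γ.IsGeodesic :=
      hc.exists_walk_length_eq_dist _ _
    have hab' := hf a b' hab
    refine ⟨γ.append β, ?_, fun y hy ↦ ?_⟩
    · have hγ' : γ.length = Y.dist (f a) (f b') := hγ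
      rw [Walk.length_append, Walk.length_cons, mul_add_one]
      omega
    rcases (Walk.mem_support_append_iff γ β).mp hy with hy | hy
    · have := hγ.dist_add_dist_of_mem_support hy
      exact ⟨a, Walk.start_mem_support _, by omega⟩
    · obtain ⟨x, hx, hxy⟩ := hnear y hy
      exact ⟨x, by simp [hx], hxy⟩

end SimpleGraph

namespace GraphHyperbolic

open Finset

variable {V : Type*} {G : SimpleGraph V}

lemma mono {δ δ' : ℝ} (hY : GraphHyperbolic G δ) (h : δ ≤ δ') : GraphHyperbolic G δ' :=
  fun _ _ _ γ₁ γ₂ γ₃ h₁ h₂ h₃ x hx ↦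
    (hY γ₁ γ₂ γ₃ h₁ h₂ h₃ x hx).imp fun _ hw ↦ ⟨hw.1, hw.2.trans h⟩

section

variable {δ : ℕ} (hY : GraphHyperbolic G δ) (hc : G.Connected)
include hY hc

/-- Thin triangles, with `x` lying on a geodesic from `a` to `b` written as
`d(a, x) + d(x, b) = d(a, b)`. -/
lemma exists_dist_le {a b x : V} (hx : G.dist a x + G.dist x b = G.dist a b) (c : V) :
    ∃ w, (G.dist b w + G.dist w c = G.dist b c ∨ G.dist c w + G.dist w a = G.dist c a) ∧
      G.dist x w ≤ δ := by
  obtain ⟨γ₁, hγ₁, hx⟩ := hc.exists_isGeodesic_mem_support hx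
  obtain ⟨γ₂, hγ₂⟩ := hc.exists_walk_length_eq_dist b c
  obtain ⟨γ₃, hγ₃⟩ := hc.exists_walk_length_eq_dist c a
  obtain ⟨w, hw, hxw⟩ := hY γ₁ γ₂ γ₃ hγ₁ hγ₂ hγ₃ x hx
  exact ⟨w, hw.imp (Walk.IsGeodesic.dist_add_dist_of_mem_support hγ₂)
    (Walk.IsGeodesic.dist_add_dist_of_mem_support hγ₃), by exact_mod_cast hxw⟩

/-- Bounded geodesic image. -/
lemma nearestIdx_le_add {u v : V} {γ : G.Walk u v} (hγ : γ.IsGeodesic) {y y' : V}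
    (hfar : ∀ x, G.dist y x + G.dist x y' = G.dist y y' →
      ∀ j ≤ γ.length, 2 * δ < G.dist x (γ.getVert j)) :
    γ.nearestIdx y' ≤ γ.nearestIdx y + (8 * δ + 2) := by
  have hz := fun j (hj : j ≤ γ.length) ↦ γ.dist_getVert_nearestIdx_le y hj
  have hz' := fun j (hj : j ≤ γ.length) ↦ γ.dist_getVert_nearestIdx_le y' hj
  have hp'γ := γ.nearestIdx_le_length y'
  generalize γ.nearestIdx y = p at *
  generalize γ.nearestIdx y' = p' at *
  by_contra! hbig
  set j := p + (p' - p) / 2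
  have hjγ : j ≤ γ.length := by omega
  have hpj := hγ.dist_getVert (show p ≤ j by omega) hjγ
  have hjp' := hγ.dist_getVert (show j ≤ p' by omega) hp'γ
  have hpp' := hγ.dist_getVert (show p ≤ p' by omega) hp'γ
  obtain ⟨w, hw, hjw⟩ :=
    hY.exists_dist_le hc (a := γ.getVert p) (b := γ.getVert p') (x := γ.getVert j) (by omega) y'
  rw [dist_comm] at hjw
  rcases hw with hw | hw
  · have := hc.dist_le_two_mul_of_dist_le (hz' j hjγ) hw
    rw [dist_comm] at this
    omega
  obtain ⟨w₂, hw₂, hww₂⟩ := hY.exists_dist_le hc hw y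
  have hw₂j : G.dist w₂ (γ.getVert j) ≤ 2 * δ := by
    have := hc.dist_triangle (u := w₂) (v := w) (w := γ.getVert j)
    rw [dist_comm (u := w₂) (v := w)] at this
    omega
  rcases hw₂ with hw₂ | hw₂
  · have := hc.dist_le_two_mul_of_dist_le (hz j hjγ) hw₂
    omega
  · have := hfar w₂ hw₂ j hjγ
    omega

lemma nearestIdx_le_add_of_dist_le {u v : V} {γ : G.Walk u v} (hγ : γ.IsGeodesic) {h : ℕ}
    (hh : 2 * δ ≤ h) {y y' : V} (hyy' : G.dist y y' ≤ h)
    (hy : 2 * h < G.dist y (γ.getVert (γ.nearestIdx y))) :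
    γ.nearestIdx y' ≤ γ.nearestIdx y + (8 * δ + 2) := by
  refine hY.nearestIdx_le_add hc hγ fun x hx j hj ↦ ?_
  have := γ.dist_getVert_nearestIdx_le y hj
  have := hc.dist_triangle (u := y) (v := x) (w := γ.getVert j)
  omega

/-- Cut `β` into blocks of `h` edges: a block that comes near `γ` stays near it and shadows its
projection, while a block staying far from `γ` has a short projection. -/
lemma exists_nearestIdx_near_of_far {u v : V} {γ : G.Walk u v} (hγ : γ.IsGeodesic)
    (β : G.Walk u v) {h : ℕ} (hh : 2 * δ + 1 ≤ h) {j : ℕ} (hjγ : j ≤ γ.length)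
    (hj : ∀ x ∈ β.support, 9 * h + 1 < G.dist (γ.getVert j) x) :
    ∃ k ≤ β.length / h, γ.nearestIdx (β.getVert (k * h)) ≤ j + 2 * (8 * δ + 2) ∧
      j ≤ γ.nearestIdx (β.getVert (k * h)) + 2 * (8 * δ + 2) := by
  have hjγ' : j < γ.length := by
    refine lt_of_le_of_ne hjγ fun hjγ ↦ ?_
    have := hj v β.end_mem_support
    rw [hjγ, Walk.getVert_length, dist_self] at this
    omega
  obtain ⟨t, htβ, hpt, hpt₁⟩ := Nat.exists_le_lt_succ_of_le_of_lt
    (f := fun t ↦ γ.nearestIdx (β.getVert t)) (n := β.length)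
    (by simp [hγ.nearestIdx_start]) (by simpa [hγ.nearestIdx_end])
  refine ⟨t / h, Nat.div_le_div_right htβ.le, ?_⟩
  have hkt : t / h * h ≤ t ∧ t < t / h * h + h :=
    ⟨Nat.div_mul_le_self t h, Nat.lt_div_mul_add (by omega)⟩
  generalize t / h = k at *
  have hβ := β.dist_getVert_getVert_le
  by_cases hfar : ∀ t' ∈ Icc (k * h) (t + 1),
      2 * h < G.dist (β.getVert t') (γ.getVert (γ.nearestIdx (β.getVert t')))
  · have h₁ := hY.nearestIdx_le_add_of_dist_le hc hγ (by omega)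
      ((hβ t (t + 1)).trans (by omega)) (hfar t (by simp; omega))
    have h₂ := hY.nearestIdx_le_add_of_dist_le hc hγ (by omega)
      ((hβ t (k * h)).trans (by omega)) (hfar t (by simp; omega))
    have h₃ := hY.nearestIdx_le_add_of_dist_le hc hγ (by omega)
      ((hβ (k * h) t).trans (by omega)) (hfar (k * h) (by simp; omega))
    omega
  push Not at hfar
  obtain ⟨t₂, ht₂, ht₂γ⟩ := hfar
  rw [mem_Icc] at ht₂
  have hheight (t' : ℕ) (ht' : t' ∈ Icc (k * h) (t + 1)) :
      G.dist (β.getVert t') (γ.getVert (γ.nearestIdx (β.getVert t'))) ≤ 3 * h := by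
    have := γ.dist_getVert_nearestIdx_le_add hc (β.getVert t') (β.getVert t₂)
    have := hβ t' t₂
    rw [mem_Icc] at ht'
    omega
  have := hγ.dist_getVert_le_of_nearestIdx_le hc hpt hpt₁.le
  have := hheight t (by simp; omega)
  have := hheight (t + 1) (by simp; omega)
  have := hβ t (t + 1)
  have := hj _ (β.getVert_mem_support t)
  omega

lemma card_filter_far_le {u v : V} {γ : G.Walk u v} (hγ : γ.IsGeodesic) (β : G.Walk u v)
    {h : ℕ} (hh : 2 * δ + 1 ≤ h) :
    #{j ∈ range (γ.length + 1) | ∀ x ∈ β.support, 9 * h + 1 < G.dist (γ.getVert j) x} ≤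
      (β.length / h + 1) * (4 * (8 * δ + 2) + 1) := by
  classical
  set B := 8 * δ + 2
  set I : ℕ → Finset ℕ := fun k ↦
    Icc (γ.nearestIdx (β.getVert (k * h)) - 2 * B) (γ.nearestIdx (β.getVert (k * h)) + 2 * B)
  calc _ ≤ #((range (β.length / h + 1)).biUnion I) := by
        refine card_le_card fun j hj ↦ ?_
        rw [mem_filter, mem_range] at hj
        obtain ⟨k, hk, hk₁, hk₂⟩ :=
          hY.exists_nearestIdx_near_of_far hc hγ β hh (Nat.lt_succ_iff.mp hj.1) hj.2
        exact mem_biUnion.mpr ⟨k, mem_range.mpr (by omega), mem_Icc.mpr ⟨by omega, by omega⟩⟩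
    _ ≤ ∑ k ∈ range (β.length / h + 1), #(I k) := card_biUnion_le
    _ ≤ ∑ k ∈ range (β.length / h + 1), (4 * B + 1) :=
        sum_le_sum fun k _ ↦ by simp only [I, Nat.card_Icc]; omega
    _ = _ := by simp

lemma exists_getVert_near_walks {u v : V} {γ : G.Walk u v} (hγ : γ.IsGeodesic)
    (β₁ β₂ : G.Walk u v) {h M : ℕ} (hh : 2 * δ + 1 ≤ h)
    (hsize : 2 * M + ((β₁.length / h + 1) * (4 * (8 * δ + 2) + 1) +
      (β₂.length / h + 1) * (4 * (8 * δ + 2) + 1)) < γ.length + 1) :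
    ∃ j, M ≤ j ∧ j + M ≤ γ.length ∧ (∃ x ∈ β₁.support, G.dist (γ.getVert j) x ≤ 9 * h + 1) ∧
      ∃ x ∈ β₂.support, G.dist (γ.getVert j) x ≤ 9 * h + 1 := by
  classical
  obtain ⟨j, hj, hj_far⟩ : ∃ j ∈ Icc M (γ.length - M),
      j ∉ {j ∈ range (γ.length + 1) | ∀ x ∈ β₁.support, 9 * h + 1 < G.dist (γ.getVert j) x} ∪
        {j ∈ range (γ.length + 1) | ∀ x ∈ β₂.support, 9 * h + 1 < G.dist (γ.getVert j) x} := by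
    by_contra! hall
    have := card_le_card hall
    have := card_union_le
      {j ∈ range (γ.length + 1) | ∀ x ∈ β₁.support, 9 * h + 1 < G.dist (γ.getVert j) x}
      {j ∈ range (γ.length + 1) | ∀ x ∈ β₂.support, 9 * h + 1 < G.dist (γ.getVert j) x}
    have := hY.card_filter_far_le hc hγ β₁ hh
    have := hY.card_filter_far_le hc hγ β₂ hh
    rw [Nat.card_Icc] at *
    omega
  rw [mem_Icc] at hj
  have hjγ : j < γ.length + 1 := by omega
  have hjM : j + M ≤ γ.length := by omega
  simp only [mem_union, mem_filter, mem_range, not_or, not_and, not_forall, not_lt,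
    exists_prop] at hj_far
  exact ⟨j, hj.1, hjM, hj_far.1 hjγ, hj_far.2 hjγ⟩

lemma exists_close_of_length_le (l : ℕ) :
    ∃ r : ℕ, ∀ M : ℕ, ∃ R : ℕ, ∀ ⦃u v : V⦄, R < G.dist u v → ∀ β₁ β₂ : G.Walk u v,
      β₁.length ≤ l * G.dist u v → β₂.length ≤ l * G.dist u v →
      ∃ x₁ ∈ β₁.support, ∃ x₂ ∈ β₂.support, G.dist x₁ x₂ ≤ r ∧
        (M < G.dist u x₁ ∧ M < G.dist v x₁) ∧ (M < G.dist u x₂ ∧ M < G.dist v x₂) := by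
  set κ := 4 * (8 * δ + 2) + 1
  set h := 2 * δ + 1 + 4 * (l + 1) * κ
  refine ⟨2 * (9 * h + 1), fun M ↦ ⟨4 * (M + 9 * h + 2) + 4 * κ, fun u v huv β₁ β₂ hβ₁ hβ₂ ↦ ?_⟩⟩
  obtain ⟨γ, hγ⟩ : ∃ γ : G.Walk u v, γ.IsGeodesic := hc.exists_walk_length_eq_dist u v
  have hshort (β : G.Walk u v) (hβ : β.length ≤ l * G.dist u v) :
      4 * (β.length / h * κ) ≤ G.dist u v :=
    Nat.four_mul_div_mul_le (a := l + 1) (hβ.trans (Nat.mul_le_mul_right _ l.le_succ))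
      l.succ_pos (by omega)
  have hsize : 2 * (M + 9 * h + 2) + ((β₁.length / h + 1) * κ + (β₂.length / h + 1) * κ) <
      γ.length + 1 := by
    have := hshort β₁ hβ₁
    have := hshort β₂ hβ₂
    rw [add_one_mul, add_one_mul, hγ]
    omega
  obtain ⟨j, hMj, hjM, ⟨x₁, hx₁, hjx₁⟩, ⟨x₂, hx₂, hjx₂⟩⟩ :=
    hY.exists_getVert_near_walks hc hγ β₁ β₂ (by omega) hsize
  have hjγ : j ≤ γ.length := by omega
  have h₀ := hγ.dist_getVert (Nat.zero_le j) hjγ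
  have h₁ := hγ.dist_getVert hjγ le_rfl
  rw [Walk.getVert_zero] at h₀
  rw [Walk.getVert_length] at h₁
  have hends (y : V) (hy : G.dist (γ.getVert j) y ≤ 9 * h + 1) :
      M < G.dist u y ∧ M < G.dist v y := by
    have := hc.dist_triangle (u := u) (v := y) (w := γ.getVert j)
    have := hc.dist_triangle (u := γ.getVert j) (v := y) (w := v)
    rw [dist_comm (u := y) (v := γ.getVert j), dist_comm (u := y) (v := v)] at *
    omega
  refine ⟨x₁, hx₁, x₂, hx₂, ?_, hends x₁ hjx₁, hends x₂ hjx₂⟩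
  have := hc.dist_triangle (u := x₁) (v := γ.getVert j) (w := x₂)
  rw [dist_comm (u := x₁) (v := γ.getVert j)] at this
  omega

end

theorem hasNoFatBigons {δ : ℝ} (hY : GraphHyperbolic G δ) (hc : G.Connected) (x₀ : V) :
    HasNoFatBigons G x₀ := by
  intro L _
  obtain ⟨r, hr⟩ := (hY.mono (Nat.le_ceil δ)).exists_close_of_length_le hc ⌈L⌉₊
  refine ⟨r, r.cast_nonneg, fun C _ ↦ ?_⟩
  obtain ⟨R, hR⟩ := hr ⌈C⌉₊
  refine ⟨R, fun x ⟨α₁, α₂, hα₁, hα₂, hsep⟩ ↦ ?_⟩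
  by_contra! hx
  have hlen (α : G.Walk x₀ x) (hα : (α.length : ℝ) ≤ L * G.dist x₀ x) :
      α.length ≤ ⌈L⌉₊ * G.dist x₀ x := by
    have : L * G.dist x₀ x ≤ ⌈L⌉₊ * G.dist x₀ x := by gcongr; exact Nat.le_ceil L
    exact_mod_cast hα.trans this
  obtain ⟨x₁, hx₁, x₂, hx₂, hx₁₂, ⟨h₁, h₂⟩, ⟨h₃, h₄⟩⟩ :=
    hR hx α₁ α₂ (hlen α₁ hα₁) (hlen α₂ hα₂)
  have := hsep x₁ hx₁ x₂ hx₂ ⟨Nat.lt_of_ceil_lt h₁, Nat.lt_of_ceil_lt h₂⟩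
    ⟨Nat.lt_of_ceil_lt h₃, Nat.lt_of_ceil_lt h₄⟩
  have : (G.dist x₁ x₂ : ℝ) ≤ r := by exact_mod_cast hx₁₂
  linarith

end GraphHyperbolic

lemma encard_le_of_mapsTo_gBall {V W : Type*} {X : SimpleGraph V} {Y : SimpleGraph W}
    (hcX : X.Connected) (hcY : Y.Connected) {DX DY N R : ℕ}
    (hDX : ∀ v, (X.neighborSet v).encard ≤ DX) (hDY : ∀ w, (Y.neighborSet w).encard ≤ DY)
    {f : V → W} (hf : ∀ a b, f a = f b → X.dist a b ≤ N) {S : Set V} {y₀ : W}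
    (hS : Set.MapsTo f S (gBall Y y₀ R)) :
    S.encard ≤ ((DY + 1) ^ (R + 1) * (DX + 1) ^ (N + 1) : ℕ) := by
  have hball := hcY.encard_gBall_le hDY y₀ R
  have hfin := Set.finite_of_encard_le_coe hball
  have hfibre (w : W) : (S ∩ f ⁻¹' {w}).encard ≤ ((DX + 1) ^ (N + 1) : ℕ) := by
    rcases (S ∩ f ⁻¹' {w}).eq_empty_or_nonempty with h | ⟨x, hxS, hxw⟩
    · simp [h]
    refine (Set.encard_mono ?_).trans (hcX.encard_gBall_le hDX x N)
    rintro y ⟨-, hyw⟩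
    exact hf x y (hxw.trans hyw.symm)
  calc S.encard ≤ (gBall Y y₀ R).ncard * (((DX + 1) ^ (N + 1) : ℕ) : ℕ∞) :=
        Set.encard_le_ncard_mul_of_subset_biUnion hfin
          (fun x hx ↦ Set.mem_biUnion (hS hx) (Set.mem_inter hx (Set.mem_singleton (f x))))
          fun w _ ↦ hfibre w
    _ ≤ ((DY + 1) ^ (R + 1) : ℕ) * (((DX + 1) ^ (N + 1) : ℕ) : ℕ∞) := by
        rw [hfin.cast_ncard_eq]; gcongr
    _ = _ := by push_cast; ring

namespace IsCoarseEmbedding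

variable {V W : Type*} {X : SimpleGraph V} {Y : SimpleGraph W} {f : V → W} {K : ℝ} {ρ : ℕ → ℕ}
  (hf : IsCoarseEmbedding X Y f K ρ)
include hf

lemma dist_le_ceil_of_adj {a b : V} (hab : X.Adj a b) : Y.dist (f a) (f b) ≤ ⌈K⌉₊ := by
  have := (hf.2.2 a b).2
  rw [SimpleGraph.dist_eq_one_iff_adj.mpr hab, Nat.cast_one, mul_one] at this
  exact_mod_cast this.trans (Nat.le_ceil K)

lemma exists_dist_lt_of_dist_le (T : ℝ) :
    ∃ s : ℕ, ∀ a b, (Y.dist (f a) (f b) : ℝ) ≤ T → X.dist a b < s := by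
  obtain ⟨s, hs⟩ := Filter.eventually_atTop.mp (hf.2.1.eventually_gt_atTop ⌈T⌉₊)
  refine ⟨s, fun a b hab ↦ ?_⟩
  by_contra! hsab
  have := Nat.lt_of_ceil_lt (hs _ hsab)
  linarith [(hf.2.2 a b).1]

lemma lt_dist_of_mul_lt {C : ℝ} {a b : V} (h : K * C < Y.dist (f a) (f b)) :
    C < X.dist a b := by
  have hK : 0 < K := zero_lt_one.trans_le hf.1
  exact lt_of_mul_lt_mul_left (h.trans_le (hf.2.2 a b).2) hK.le

lemma lt_dist_of_dist_le (hc : Y.Connected) {C : ℝ} {a u : V} {y : W}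
    (hu : Y.dist (f u) y ≤ ⌈K⌉₊) (hy : K * C + ⌈K⌉₊ < Y.dist (f a) y) : C < X.dist a u := by
  refine hf.lt_dist_of_mul_lt ?_
  have : (Y.dist (f a) y : ℝ) ≤ Y.dist (f a) (f u) + Y.dist (f u) y := by
    exact_mod_cast hc.dist_triangle
  have : (Y.dist (f u) y : ℝ) ≤ ⌈K⌉₊ := by exact_mod_cast hu
  linarith

lemma map_mem_bigonSet (hc : Y.Connected) {x₀ x : V} {L s C L' s' : ℝ}
    (hx : x ∈ bigonSet X x₀ L s C)
    (hs : ∀ a b, (Y.dist (f a) (f b) : ℝ) ≤ s' + 2 * ⌈K⌉₊ → (X.dist a b : ℝ) ≤ s)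
    (hlen : ⌈K⌉₊ * L * X.dist x₀ x ≤ L' * Y.dist (f x₀) (f x)) :
    f x ∈ bigonSet Y (f x₀) L' s' (K * C + ⌈K⌉₊) := by
  obtain ⟨α₁, α₂, hα₁, hα₂, hsep⟩ := hx
  have hadj := fun a b (hab : X.Adj a b) ↦ hf.dist_le_ceil_of_adj hab
  obtain ⟨β₁, hβ₁, hnear₁⟩ := α₁.exists_walk_near_image hc hadj
  obtain ⟨β₂, hβ₂, hnear₂⟩ := α₂.exists_walk_near_image hc hadj
  have hlength {α : X.Walk x₀ x} {β : Y.Walk (f x₀) (f x)}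
      (hα : (α.length : ℝ) ≤ L * X.dist x₀ x) (hβ : β.length ≤ ⌈K⌉₊ * α.length) :
      (β.length : ℝ) ≤ L' * Y.dist (f x₀) (f x) := by
    have : (β.length : ℝ) ≤ ⌈K⌉₊ * α.length := by exact_mod_cast hβ
    nlinarith [(Nat.cast_nonneg ⌈K⌉₊ : (0 : ℝ) ≤ _)]
  refine ⟨β₁, β₂, hlength hα₁ hβ₁, hlength hα₂ hβ₂, fun y₁ hy₁ y₂ hy₂ hfar₁ hfar₂ ↦ ?_⟩
  obtain ⟨u₁, hu₁, hd₁⟩ := hnear₁ y₁ hy₁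
  obtain ⟨u₂, hu₂, hd₂⟩ := hnear₂ y₂ hy₂
  have hsep := hsep u₁ hu₁ u₂ hu₂
    ⟨hf.lt_dist_of_dist_le hc hd₁ hfar₁.1, hf.lt_dist_of_dist_le hc hd₁ hfar₁.2⟩
    ⟨hf.lt_dist_of_dist_le hc hd₂ hfar₂.1, hf.lt_dist_of_dist_le hc hd₂ hfar₂.2⟩
  by_contra! hclose
  have hu₁u₂ : Y.dist (f u₁) (f u₂) ≤ Y.dist y₁ y₂ + 2 * ⌈K⌉₊ := by
    have := hc.dist_triangle (u := f u₁) (v := y₁) (w := f u₂)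
    have := hc.dist_triangle (u := y₁) (v := y₂) (w := f u₂)
    rw [SimpleGraph.dist_comm (u := y₂)] at this
    omega
  have : (Y.dist (f u₁) (f u₂) : ℝ) ≤ Y.dist y₁ y₂ + 2 * ⌈K⌉₊ := by exact_mod_cast hu₁u₂
  linarith [hs u₁ u₂ (by linarith)]

lemma exists_lt_dist_of_pow_le_ncard (hcX : X.Connected) (hcY : Y.Connected)
    (hdX : BddDegree X) (hdY : BddDegree Y) {c : ℝ} (hc : 1 < c) (y₀ : W) :
    ∃ Λ n₀ : ℕ, 0 < Λ ∧
      ∀ n ≥ n₀, ∀ S : Set V, c ^ n ≤ S.ncard → ∃ x ∈ S, n < Λ * Y.dist y₀ (f x) := by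
  obtain ⟨DX, hDX⟩ := hdX
  obtain ⟨DY, hDY⟩ := hdY
  obtain ⟨N, hN⟩ := hf.exists_dist_lt_of_dist_le 0
  obtain ⟨Λ, n₀, hΛ, hpow⟩ := exists_pow_div_add_one_mul_lt_pow hc (DY + 1) ((DX + 1) ^ (N + 1))
  refine ⟨Λ, n₀, hΛ, fun n hn S hS ↦ ?_⟩
  by_contra! hnear
  have hS' := encard_le_of_mapsTo_gBall hcX hcY hDX hDY (f := f)
    (fun a b hab ↦ (hN a b (by simp [hab])).le) (R := n / Λ)
    fun x hx ↦ (Nat.le_div_iff_mul_le hΛ).mpr (by rw [mul_comm]; exact hnear x hx)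
  have hS'' : S.ncard ≤ (DY + 1) ^ (n / Λ + 1) * (DX + 1) ^ (N + 1) :=
    ENat.toNat_le_of_le_natCast hS'
  have : (S.ncard : ℝ) ≤ ((DY + 1) ^ (n / Λ + 1) * (DX + 1) ^ (N + 1) : ℕ) := by
    exact_mod_cast hS''
  linarith [hpow n hn]

end IsCoarseEmbedding

theorem no_coarse_embedding_into_hyperbolic_general
    {V W : Type*} (X : SimpleGraph V) (Y : SimpleGraph W)
    (hXconn : X.Connected) (hXdeg : BddDegree X)
    (x₀ : V) (hX : HasExpManyFatBigons X x₀)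
    (hYconn : Y.Connected) (hYdeg : BddDegree Y)
    (δ : ℝ) (hY : GraphHyperbolic Y δ)
    (f : V → W) (K : ℝ) (ρ : ℕ → ℕ) :
    ¬ IsCoarseEmbedding X Y f K ρ := by
  intro hf
  obtain ⟨s₀, c, L, -, hc, hL, hbigons⟩ := hX
  obtain ⟨Λ, n₀, hΛ, hfar⟩ :=
    hf.exists_lt_dist_of_pow_le_ncard hXconn hYconn hXdeg hYdeg hc (f x₀)
  set k := ⌈K⌉₊
  have hk : (1 : ℝ) ≤ k := Nat.one_le_cast.mpr (Nat.ceil_pos.mpr (by linarith [hf.1]))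
  have hΛ' : (1 : ℝ) ≤ Λ := by exact_mod_cast hΛ
  obtain ⟨s', -, hYbigons⟩ := hY.hasNoFatBigons hYconn (f x₀) (k * L * Λ)
    (one_le_mul_of_one_le_of_one_le (one_le_mul_of_one_le_of_one_le hk hL.le) hΛ')
  obtain ⟨s, hs⟩ := hf.exists_dist_lt_of_dist_le (s' + 2 * k)
  obtain ⟨C, hC, hinf⟩ := hbigons (max s₀ s) (le_max_left _ _)
  obtain ⟨R, hR⟩ := hYbigons (K * C + k) (by nlinarith [hf.1])
  obtain ⟨n, hn, hn_gt⟩ := hinf.exists_gt (n₀ + Λ * R)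
  obtain ⟨x, ⟨hx, hxn⟩, hxfar⟩ := hfar n (by omega) _ hn
  have hxΛ : (X.dist x₀ x : ℝ) ≤ Λ * Y.dist (f x₀) (f x) := by
    exact_mod_cast (show X.dist x₀ x ≤ n from hxn).trans hxfar.le
  have hxR := hR (f x) (hf.map_mem_bigonSet hYconn hx
    (fun a b hab ↦ (Nat.cast_lt.mpr (hs a b hab)).le.trans (le_max_right _ _))
    (by rw [mul_assoc _ (Λ : ℝ)]; gcongr))
  have := Nat.mul_le_mul_left Λ hxR
  omega

/-- A connected bounded-degree graph with exponentially many fat bigons at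
some base vertex admits no coarse embedding into any `δ`-hyperbolic connected graph of
uniformly bounded degree. -/
theorem no_coarse_embedding_into_hyperbolic
    {V W : Type*} (X : SimpleGraph V) (Y : SimpleGraph W)
    (hXconn : X.Connected) (hXdeg : BddDegree X)
    (x₀ : V) (hX : HasExpManyFatBigons X x₀)
    (hYconn : Y.Connected) (hYdeg : BddDegree Y)
    (δ : ℝ) (hδ : 1 ≤ δ) (hY : GraphHyperbolic Y δ)
    (f : V → W) (K : ℝ) (ρ : ℕ → ℕ) :
    ¬ IsCoarseEmbedding X Y f K ρ :=
  no_coarse_embedding_into_hyperbolic_general X Y hXconn hXdeg x₀ hX hYconn hYdeg δ hY f K ρ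
end

section
/- Let X be a connected graph of uniformly bounded degree with base vertex x0, and suppose X has no fat bigons at x0. Then for any other vertex x0' of X, X has no fat bigons at x0'. (Hence having no fat bigons is independent of the choice of basepoint.) -/
open SimpleGraph

/-! Prepending a fixed walk `w` from `x₀` to `x₀'` turns an `(L,s,C)`-bigon at `x` based at `x₀'`
into an `(L+1, s, C+|w|)`-bigon based at `x₀`, as soon as `d(x₀,x) ≥ |w|(L+1)`: the extra length
`|w|` is absorbed by the slack `d(x₀,x)`, and every vertex of `w` lies in the enlarged
neighbourhood of `x₀`. Hence vertices with fat bigons based at `x₀'` lie within bounded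
distance of `x₀`. -/

namespace SimpleGraph

variable {V : Type*} {G : SimpleGraph V}

theorem Walk.dist_le_length_of_mem_support {u v z : V} (w : G.Walk u v) (hz : z ∈ w.support) :
    G.dist u z ≤ w.length := by
  classical
  exact (dist_le (w.takeUntil z hz)).trans (w.length_takeUntil_le_length hz)

theorem Connected.dist_le_length_add_dist (hG : G.Connected) {u v : V} (w : G.Walk u v) (z : V) :
    G.dist u z ≤ w.length + G.dist v z :=
  hG.dist_triangle.trans (by gcongr; exact dist_le w)

theorem Connected.isBigonAt_append_walk (hG : G.Connected) {x₀ x₀' x : V} {L s C : ℝ}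
    (hL : 0 ≤ L) (hC : 0 ≤ C) (w : G.Walk x₀ x₀') (hx : IsBigonAt G x₀' L s C x)
    (hfar : (w.length : ℝ) * (L + 1) ≤ G.dist x₀ x) :
    IsBigonAt G x₀ (L + 1) s (C + w.length) x := by
  obtain ⟨α₁, α₂, hα₁, hα₂, hsep⟩ := hx
  have hbase : (G.dist x₀' x : ℝ) ≤ w.length + G.dist x₀ x := by
    exact_mod_cast w.length_reverse ▸ hG.dist_le_length_add_dist w.reverse x
  have hlen {α : G.Walk x₀' x} (hα : (α.length : ℝ) ≤ L * G.dist x₀' x) :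
      ((w.append α).length : ℝ) ≤ (L + 1) * G.dist x₀ x := by
    rw [Walk.length_append, Nat.cast_add]
    nlinarith
  have hfar_vertex {α : G.Walk x₀' x} {u : V} (hu : u ∈ (w.append α).support)
      (hu₀ : C + w.length < G.dist x₀ u) : u ∈ α.support ∧ C < G.dist x₀' u := by
    have htri : (G.dist x₀ u : ℝ) ≤ w.length + G.dist x₀' u := by
      exact_mod_cast hG.dist_le_length_add_dist w u
    refine ⟨?_, by linarith⟩
    rcases (Walk.mem_support_append_iff _ _).mp hu with hw | hα
    · have : (G.dist x₀ u : ℝ) ≤ w.length := by exact_mod_cast w.dist_le_length_of_mem_support hw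
      linarith
    · exact hα
  refine ⟨w.append α₁, w.append α₂, hlen hα₁, hlen hα₂, ?_⟩
  intro u hu v hv ⟨hu₀, hux⟩ ⟨hv₀, hvx⟩
  obtain ⟨hu', hu₀'⟩ := hfar_vertex hu hu₀
  obtain ⟨hv', hv₀'⟩ := hfar_vertex hv hv₀
  have hw : (0 : ℝ) ≤ w.length := Nat.cast_nonneg _
  exact hsep u hu' v hv' ⟨hu₀', by linarith⟩ ⟨hv₀', by linarith⟩

end SimpleGraph

theorem hasNoFatBigons_basepoint_invariant_general
    {V : Type*} (X : SimpleGraph V)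
    (hXconn : X.Connected)
    (x₀ : V) (h : HasNoFatBigons X x₀) :
    ∀ x₀' : V, HasNoFatBigons X x₀' := by
  intro x₀' L hL
  obtain ⟨s, hs₀, hs⟩ := h (L + 1) (by linarith)
  refine ⟨s, hs₀, fun C hC => ?_⟩
  obtain ⟨w⟩ := hXconn.preconnected x₀ x₀'
  obtain ⟨R, hR⟩ := hs (C + w.length) (by positivity)
  refine ⟨w.length + max R ⌈(w.length : ℝ) * (L + 1)⌉₊, fun x hx => ?_⟩
  have hx₀ : X.dist x₀ x ≤ max R ⌈(w.length : ℝ) * (L + 1)⌉₊ := by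
    by_cases hfar : (w.length : ℝ) * (L + 1) ≤ X.dist x₀ x
    · exact le_max_of_le_left (hR x (hXconn.isBigonAt_append_walk (by linarith) hC w hx hfar))
    · exact le_max_of_le_right (by exact_mod_cast (not_le.mp hfar).le.trans (Nat.le_ceil _))
  calc X.dist x₀' x ≤ w.reverse.length + X.dist x₀ x := hXconn.dist_le_length_add_dist w.reverse x
    _ ≤ w.length + max R ⌈(w.length : ℝ) * (L + 1)⌉₊ := by rw [Walk.length_reverse]; gcongr

/-- Having no fat bigons is independent of the basepoint. -/
theorem hasNoFatBigons_basepoint_invariant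
    {V : Type*} (X : SimpleGraph V)
    (hXconn : X.Connected) (hXdeg : BddDegree X)
    (x₀ : V) (h : HasNoFatBigons X x₀) :
    ∀ x₀' : V, HasNoFatBigons X x₀' :=
  hasNoFatBigons_basepoint_invariant_general X hXconn x₀ h
end

section
/- Let X be a connected graph of uniformly bounded degree that has exponentially many fat bigons at a base vertex x0. Then for every vertex x0' of X, X has exponentially many fat bigons at x0'. (Hence having exponentially many fat bigons is independent of the choice of basepoint.) -/
open SimpleGraph

/-
Prepending to each path of a bigon based at `x₀` a geodesic from `x₀'` to `x₀` (of length
`d = d(x₀', x₀)`) yields a bigon based at `x₀'` with constants `(L + (L + 1) d, s, C + d)`: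
vertices beyond distance `C + d` from `x₀'` cannot lie on the geodesic and are beyond distance `C`
from `x₀`. As `B_n(x₀) ⊆ B_{n+d}(x₀')`, the count `cⁿ` at radius `n` becomes at least `(√c)^(n+d)`
at radius `n + d` once `n ≥ d`. Bounded degree keeps balls finite, so that cardinalities are
monotone under inclusion.
-/

namespace SimpleGraph

variable {V : Type*} {X : SimpleGraph V}

lemma Walk.dist_le_length_of_mem_support_s4 {a b u : V} (p : X.Walk a b) (hu : u ∈ p.support) :
    X.dist a u ≤ p.length := by
  classical
  exact (dist_le (p.takeUntil u hu)).trans (p.length_takeUntil_le_length hu)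

lemma gBall_succ_subset (hconn : X.Connected) (x : V) (n : ℕ) :
    gBall X x (n + 1) ⊆ ⋃ w ∈ gBall X x n, insert w (X.neighborSet w) := by
  intro u hu
  rcases Nat.lt_or_eq_of_le (show X.dist x u ≤ n + 1 from hu) with hlt | heq
  · exact Set.mem_biUnion (Nat.lt_succ_iff.mp hlt) (Set.mem_insert u _)
  obtain ⟨p, hp⟩ := hconn.exists_walk_length_eq_dist u x
  rw [dist_comm, heq] at hp
  cases p with
  | nil => simp at hp
  | @cons _ w _ hadj q =>
    have hq : q.length = n := by simpa using hp
    have hw : X.dist x w ≤ n := dist_comm (G := X) ▸ hq ▸ dist_le q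
    exact Set.mem_biUnion hw (Set.mem_insert_of_mem w hadj.symm)

lemma gBall_finite (hconn : X.Connected) (hdeg : BddDegree X) (x : V) (n : ℕ) :
    (gBall X x n).Finite := by
  obtain ⟨D, hD⟩ := hdeg
  induction n with
  | zero =>
    refine (Set.finite_singleton x).subset fun v hv => ?_
    exact (hconn.dist_eq_zero_iff.mp (Nat.le_zero.mp hv)).symm
  | succ n ih =>
    exact (ih.biUnion fun w _ => (Set.finite_of_encard_le_coe (hD w)).insert w).subset
      (gBall_succ_subset hconn x n)

lemma gBall_subset_gBall_add_dist (hconn : X.Connected) (x₀ x₀' : V) (n : ℕ) :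
    gBall X x₀ n ⊆ gBall X x₀' (n + X.dist x₀' x₀) := fun x hx => by
  have := hconn.dist_triangle (u := x₀') (v := x₀) (w := x)
  have : X.dist x₀ x ≤ n := hx
  show X.dist x₀' x ≤ n + X.dist x₀' x₀
  omega

lemma isBigonAt_self (x₀ : V) (L s : ℝ) {C : ℝ} (hC : 0 ≤ C) : IsBigonAt X x₀ L s C x₀ := by
  refine ⟨.nil, .nil, by simp, by simp, fun u hu _ _ hfar _ => ?_⟩
  rw [Walk.support_nil, List.mem_singleton] at hu
  subst hu
  simp only [dist_self, CharP.cast_eq_zero] at hfar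
  linarith [hfar.1]

lemma Walk.mem_support_of_lt_dist_append {x₀' x₀ x u : V} {C : ℝ} (hC : 0 ≤ C)
    (γ : X.Walk x₀' x₀) (α : X.Walk x₀ x) (hu : u ∈ (γ.append α).support)
    (hfar : C + γ.length < X.dist x₀' u) : u ∈ α.support ∧ C < X.dist x₀ u := by
  rcases (Walk.mem_support_append_iff γ α).mp hu with huγ | huα
  · have : (X.dist x₀' u : ℝ) ≤ γ.length := by exact_mod_cast γ.dist_le_length_of_mem_support_s4 huγ
    linarith
  · have htri : X.dist x₀' u ≤ γ.length + X.dist x₀ u :=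
      ((γ.reachable.dist_triangle_left u).trans (Nat.add_le_add_right (dist_le γ) _))
    refine ⟨huα, ?_⟩
    have : (X.dist x₀' u : ℝ) ≤ γ.length + X.dist x₀ u := by exact_mod_cast htri
    linarith

lemma IsBigonAt.change_basepoint (hconn : X.Connected) {x₀ x : V} {L s C : ℝ} (hL : 0 ≤ L)
    (hC : 0 ≤ C) (h : IsBigonAt X x₀ L s C x) (x₀' : V) :
    IsBigonAt X x₀' (L + (L + 1) * X.dist x₀' x₀) s (C + X.dist x₀' x₀) x := by
  by_cases hx : x = x₀'
  · subst hx
    exact isBigonAt_self x _ s (by positivity)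
  obtain ⟨α₁, α₂, hα₁, hα₂, hsep⟩ := h
  obtain ⟨γ, hγ⟩ := hconn.exists_walk_length_eq_dist x₀' x₀
  have hlen : ∀ α : X.Walk x₀ x, (α.length : ℝ) ≤ L * X.dist x₀ x →
      ((γ.append α).length : ℝ) ≤ (L + (L + 1) * X.dist x₀' x₀) * X.dist x₀' x := by
    intro α hα
    have hpos : (1 : ℝ) ≤ X.dist x₀' x := by exact_mod_cast hconn.pos_dist_of_ne (Ne.symm hx)
    have htri : (X.dist x₀ x : ℝ) ≤ X.dist x₀' x₀ + X.dist x₀' x := by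
      exact_mod_cast (hconn.dist_triangle (v := x₀')).trans_eq (by rw [dist_comm])
    rw [Walk.length_append, Nat.cast_add, hγ]
    nlinarith [mul_le_mul_of_nonneg_left htri hL,
      mul_le_mul_of_nonneg_left hpos (by positivity : (0 : ℝ) ≤ (L + 1) * X.dist x₀' x₀)]
  refine ⟨γ.append α₁, γ.append α₂, hlen α₁ hα₁, hlen α₂ hα₂, fun u hu v hv hfaru hfarv => ?_⟩
  rw [← hγ] at hfaru hfarv
  have hfar_end : ∀ w : V, C + γ.length < X.dist x w → C < X.dist x w := fun w hw => by
    linarith [(Nat.cast_nonneg γ.length : (0 : ℝ) ≤ _)]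
  obtain ⟨hu', hfaru'⟩ := γ.mem_support_of_lt_dist_append hC α₁ hu hfaru.1
  obtain ⟨hv', hfarv'⟩ := γ.mem_support_of_lt_dist_append hC α₂ hv hfarv.1
  exact hsep u hu' v hv' ⟨hfaru', hfar_end u hfaru.2⟩ ⟨hfarv', hfar_end v hfarv.2⟩

lemma bigonSet_inter_gBall_subset (hconn : X.Connected) {L s C : ℝ} (hL : 0 ≤ L) (hC : 0 ≤ C)
    (x₀ x₀' : V) (n : ℕ) :
    bigonSet X x₀ L s C ∩ gBall X x₀ n ⊆
      bigonSet X x₀' (L + (L + 1) * X.dist x₀' x₀) s (C + X.dist x₀' x₀) ∩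
        gBall X x₀' (n + X.dist x₀' x₀) :=
  fun _ ⟨hbig, hball⟩ => ⟨hbig.change_basepoint hconn hL hC x₀',
    gBall_subset_gBall_add_dist hconn x₀ x₀' n hball⟩

end SimpleGraph

lemma infinite_setOf_sqrt_pow_le_of_le_shift {f g : ℕ → ℕ} {c : ℝ} (hc : 1 ≤ c) (d : ℕ)
    (hfg : ∀ n, f n ≤ g (n + d)) (hf : {n | c ^ n ≤ (f n : ℝ)}.Infinite) :
    {m | √c ^ m ≤ (g m : ℝ)}.Infinite := by
  refine Set.infinite_of_forall_exists_gt fun a => ?_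
  obtain ⟨n, hn, han⟩ := hf.exists_gt (a + d)
  refine ⟨n + d, ?_, by omega⟩
  calc √c ^ (n + d) ≤ √c ^ (2 * n) := pow_le_pow_right₀ (Real.one_le_sqrt.mpr hc) (by omega)
    _ = c ^ n := by rw [pow_mul, Real.sq_sqrt (by linarith)]
    _ ≤ f n := hn
    _ ≤ g (n + d) := by exact_mod_cast hfg n

/-- Having exponentially many fat bigons is independent of the basepoint. -/
theorem hasExpManyFatBigons_basepoint_invariant
    {V : Type*} (X : SimpleGraph V)
    (hXconn : X.Connected) (hXdeg : BddDegree X)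
    (x₀ : V) (h : HasExpManyFatBigons X x₀) :
    ∀ x₀' : V, HasExpManyFatBigons X x₀' := by
  intro x₀'
  obtain ⟨s₀, c, L, hs₀, hc, hL, hbigons⟩ := h
  set d := X.dist x₀' x₀
  refine ⟨s₀, √c, L + (L + 1) * d, hs₀, Real.lt_sqrt_of_sq_lt (by linarith),
    lt_add_of_lt_of_nonneg hL (by positivity), ?_⟩
  intro s hs
  obtain ⟨C, hC, hinf⟩ := hbigons s hs
  refine ⟨C + d, by positivity, infinite_setOf_sqrt_pow_le_of_le_shift hc.le d (fun n => ?_) hinf⟩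
  exact Set.ncard_le_ncard (bigonSet_inter_gBall_subset hXconn (by linarith) hC x₀ x₀' n)
    ((gBall_finite hXconn hXdeg x₀' _).subset Set.inter_subset_right)
end
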